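/- arXiv:1004.4159 — 3 statements merged into one kernel-verified Lean document; each statement's English description precedes it below -/
import Mathlib

section
/- Let n ≥ 1 and let 0 = W_0 < W_1 < ⋯ < W_n be real numbers, and set a_i = W_i − W_{i−1} > 0 for 1 ≤ i ≤ n. Let B = [0,W_1] × ⋯ × [0,W_n], for a permutation π let C_π = {x ∈ B : x_{π(1)} ≥ ⋯ ≥ x_{π(n)}}, and for ρ ∈ {1,…,n}^n let B_ρ = (W_{ρ_1−1}, W_{ρ_1}) × ⋯ × (W_{ρ_n−1}, W_{ρ_n}) and let G_ρ be the stabilizer of ρ under the action of the symmetric group S_n permuting coordinates of ρ. Then for every ρ and every permutation π: if C_π ∩ B_ρ = ∅ then Vol(C_π ∩ B_ρ) = 0, and otherwise Vol(C_π ∩ B_ρ) = (a_{ρ_1} a_{ρ_2} ⋯ a_{ρ_n}) / |G_ρ|. -/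
/-!
Up to the null set of points with a repeated coordinate, `ℝⁿ` is the disjoint union of the
cones `{y | y ∘ τ antitone}`, `τ ∈ Sₙ`, each carried onto the standard cone by the
volume-preserving map `y ↦ y ∘ τ`. A point of `B_ρ` lies in the cone of `τ` only if `ρ ∘ τ` is
antitone, i.e. `ρ ∘ τ = ρ ∘ π` for any `π` sorting `ρ`; these are the `|G_ρ|` permutations of the
coset `G_ρ π`, and their pieces of `B_ρ` all have the volume of `B_{ρ ∘ π} ∩ {y antitone}`. So
`|G_ρ| · Vol(B_ρ ∩ cone π) = Vol(B_ρ) = ∏ a_{ρ_i}`. Finally, if `C_π` meets `B_ρ`, then `π` sorts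
`ρ` and `B_ρ ⊆ B`, so that `C_π ∩ B_ρ = B_ρ ∩ cone π`.
-/

open MeasureTheory

/-- The box `[0, W₁] × ⋯ × [0, Wₙ]` (0-indexed: coordinate `i` ranges over `[0, W (i+1)]`). -/
def box (n : ℕ) (W : ℕ → ℝ) : Set (Fin n → ℝ) :=
  {x | ∀ i : Fin n, x i ∈ Set.Icc 0 (W ((i : ℕ) + 1))}

/-- The region `C_π = {x ∈ B : x_{π(1)} ≥ x_{π(2)} ≥ ⋯ ≥ x_{π(n)}}`. -/
def Cpi (n : ℕ) (W : ℕ → ℝ) (π : Equiv.Perm (Fin n)) : Set (Fin n → ℝ) :=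
  {x ∈ box n W | ∀ i j : Fin n, i ≤ j → x (π j) ≤ x (π i)}

/-- The open box `B_ρ = (W_{ρ₁-1}, W_{ρ₁}) × ⋯ × (W_{ρₙ-1}, W_{ρₙ})`; a value `ρ i : Fin n`
represents the 1-indexed value `(ρ i : ℕ) + 1`. -/
def Brho (n : ℕ) (W : ℕ → ℝ) (ρ : Fin n → Fin n) : Set (Fin n → ℝ) :=
  {x | ∀ i : Fin n, x i ∈ Set.Ioo (W ((ρ i : ℕ))) (W ((ρ i : ℕ) + 1))}

/-- The stabilizer `G_ρ ≤ Sₙ` of `ρ` under the coordinate-permuting action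
`(σ • ρ) i = ρ (σ⁻¹ i)` (equivalently, `τ` stabilizes `ρ` iff `ρ ∘ τ = ρ`). -/
def stab (n : ℕ) (ρ : Fin n → Fin n) : Subgroup (Equiv.Perm (Fin n)) where
  carrier := {τ | ρ ∘ ⇑τ = ρ}
  one_mem' := rfl
  mul_mem' := by
    intro a b ha hb
    simp only [Set.mem_setOf_eq] at *
    show ρ ∘ (⇑a ∘ ⇑b) = ρ
    rw [← Function.comp_assoc, ha, hb]
  inv_mem' := by
    intro a ha
    simp only [Set.mem_setOf_eq] at *
    funext i
    have h := congrFun ha (a⁻¹ i)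
    simpa using h.symm

section PermutationsOfCoordinates

variable {ι : Type*} [Fintype ι]

lemma measurePreserving_comp_perm {α : Type*} [MeasureSpace α] [SigmaFinite (volume : Measure α)]
    (τ : Equiv.Perm ι) : MeasurePreserving (fun y : ι → α => y ∘ τ) volume volume := by
  convert volume_measurePreserving_piCongrLeft (fun _ : ι => α) τ.symm using 1
  funext y j
  simpa using (MeasurableEquiv.piCongrLeft_apply_apply (β := fun _ : ι => α) τ.symm y (τ j)).symm

lemma volume_setOf_not_injective [DecidableEq ι] :
    volume {y : ι → ℝ | ¬ Function.Injective y} = 0 := by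
  have hsub : {y : ι → ℝ | ¬ Function.Injective y} ⊆
      ⋃ (i : ι) (j : ι) (_ : i ≠ j), {y | y i = y j} := by
    intro y hy
    simp only [Function.Injective, not_forall] at hy
    obtain ⟨i, j, hij, hne⟩ := hy
    exact Set.mem_iUnion₂.2 ⟨i, j, Set.mem_iUnion.2 ⟨hne, hij⟩⟩
  refine measure_mono_null hsub <| measure_iUnion_null fun i => measure_iUnion_null fun j =>
    measure_iUnion_null fun hij => ?_
  have hker : {y : ι → ℝ | y i = y j} =
      LinearMap.ker ((LinearMap.proj i : (ι → ℝ) →ₗ[ℝ] ℝ) - LinearMap.proj j) := by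
    ext y; simp [sub_eq_zero]
  rw [hker]
  refine Measure.addHaar_submodule _ _ fun htop => ?_
  have hmem := htop ▸ Submodule.mem_top (x := Pi.single i (1 : ℝ))
  simp [Pi.single_eq_of_ne (Ne.symm hij)] at hmem

end PermutationsOfCoordinates

lemma volume_eq_sum_inter_antitone_comp {n : ℕ} {s : Set (Fin n → ℝ)} (hs : MeasurableSet s) :
    volume s = ∑ τ : Equiv.Perm (Fin n), volume (s ∩ {y | Antitone (y ∘ τ)}) := by
  have hsort (y : Fin n → ℝ) : Antitone (y ∘ Tuple.sort (OrderDual.toDual ∘ y)) :=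
    fun _ _ hij => Tuple.monotone_sort (OrderDual.toDual ∘ y) hij
  have hmeas (τ : Equiv.Perm (Fin n)) : MeasurableSet {y : Fin n → ℝ | Antitone (y ∘ τ)} :=
    (measurePreserving_comp_perm τ).measurable isClosed_antitone.measurableSet
  have hdisj : Pairwise (Function.onFun (AEDisjoint volume) fun τ : Equiv.Perm (Fin n) =>
      s ∩ {y | Antitone (y ∘ τ)}) := by
    intro τ₁ τ₂ hne
    refine measure_mono_null (fun y hy => ?_) volume_setOf_not_injective
    exact fun hinj => hne <| Equiv.ext fun i =>
      hinj (congrFun (Tuple.unique_antitone hy.1.2 hy.2.2) i)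
  calc volume s = volume (⋃ τ : Equiv.Perm (Fin n), s ∩ {y | Antitone (y ∘ τ)}) := by
        rw [← Set.inter_iUnion, Set.iUnion_eq_univ_iff.2 fun y => ⟨_, hsort y⟩, Set.inter_univ]
    _ = _ := by
        rw [measure_iUnion₀ hdisj fun τ => (hs.inter (hmeas τ)).nullMeasurableSet, tsum_fintype]

section Boxes

variable {n : ℕ} {W : ℕ → ℝ}

lemma measurableSet_Brho (ρ : Fin n → Fin n) : MeasurableSet (Brho n W ρ) := by
  convert MeasurableSet.univ_pi fun i => measurableSet_Ioo (a := W (ρ i)) (b := W (ρ i + 1))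
  ext y; simp [Brho]

lemma volume_Brho (hW : MonotoneOn W (Set.Iic n)) (ρ : Fin n → Fin n) :
    volume (Brho n W ρ) = ENNReal.ofReal (∏ i, (W (ρ i + 1) - W (ρ i))) := by
  have hBrho : Brho n W ρ = Set.univ.pi fun i => Set.Ioo (W (ρ i)) (W (ρ i + 1)) := by
    ext y; simp [Brho]
  rw [hBrho, volume_pi_pi, ENNReal.ofReal_prod_of_nonneg fun i _ => sub_nonneg.2 <|
    hW (by simp) (by simp) (Nat.le_succ _)]
  simp only [Real.volume_Ioo]

lemma preimage_comp_perm_Brho (ρ : Fin n → Fin n) (τ : Equiv.Perm (Fin n)) :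
    (fun y => y ∘ τ) ⁻¹' Brho n W (ρ ∘ τ) = Brho n W ρ := by
  ext y
  simp only [Brho, Set.mem_preimage, Set.mem_ofPred_eq, Function.comp_apply]
  exact τ.forall_congr_right (q := fun j => y j ∈ Set.Ioo (W (ρ j)) (W (ρ j + 1)))

lemma antitone_of_mem_Brho (hW : MonotoneOn W (Set.Iic n)) {ρ : Fin n → Fin n}
    {y : Fin n → ℝ} (hy : y ∈ Brho n W ρ) (hanti : Antitone y) : Antitone ρ := by
  intro i j hij
  by_contra! hlt
  have hWle : W (ρ i + 1) ≤ W (ρ j) := hW (by simp) (by simp) (by omega)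
  linarith [hanti hij, (hy i).2, (hy j).1]

lemma Brho_subset_box (hW0 : W 0 = 0) (hW : MonotoneOn W (Set.Iic n)) {ρ : Fin n → Fin n}
    (h : (box n W ∩ Brho n W ρ).Nonempty) : Brho n W ρ ⊆ box n W := by
  obtain ⟨x, hxbox, hxρ⟩ := h
  have hρ (i : Fin n) : (ρ i : ℕ) ≤ i := by
    by_contra! hlt
    have hWle : W (i + 1) ≤ W (ρ i) := hW (by simp) (by simp) (by omega)
    linarith [(hxbox i).2, (hxρ i).1]
  intro y hy i
  have hW0le : W 0 ≤ W (ρ i) := hW (by simp) (by simp) (Nat.zero_le _)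
  have hWle : W (ρ i + 1) ≤ W (i + 1) := hW (by simp) (by simp) (by simp [hρ i])
  exact ⟨by linarith [(hy i).1], by linarith [(hy i).2]⟩

lemma volume_Brho_inter_antitone_comp (ρ : Fin n → Fin n) (τ : Equiv.Perm (Fin n)) :
    volume (Brho n W ρ ∩ {y | Antitone (y ∘ τ)}) =
      volume (Brho n W (ρ ∘ τ) ∩ {y | Antitone y}) := by
  rw [← preimage_comp_perm_Brho ρ τ]
  exact (measurePreserving_comp_perm τ).measure_preimage
    ((measurableSet_Brho _).inter isClosed_antitone.measurableSet).nullMeasurableSet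

lemma card_filter_comp_eq_comp (ρ : Fin n → Fin n) (π : Equiv.Perm (Fin n)) :
    (Finset.univ.filter fun τ : Equiv.Perm (Fin n) => ρ ∘ τ = ρ ∘ π).card =
      Nat.card (stab n ρ) := by
  rw [← Fintype.card_subtype, ← Nat.card_eq_fintype_card]
  refine Nat.card_congr ((Equiv.mulRight π⁻¹).subtypeEquiv fun τ => ?_)
  show ρ ∘ τ = ρ ∘ π ↔ ρ ∘ ⇑(τ * π⁻¹) = ρ
  rw [Equiv.Perm.coe_mul, Equiv.Perm.coe_inv, ← Function.comp_assoc, Equiv.comp_symm_eq]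

lemma card_stab_mul_volume_Brho_inter_antitone (hW : MonotoneOn W (Set.Iic n))
    {ρ : Fin n → Fin n} {π : Equiv.Perm (Fin n)} (hρπ : Antitone (ρ ∘ π)) :
    Nat.card (stab n ρ) * volume (Brho n W ρ ∩ {y | Antitone (y ∘ π)}) = volume (Brho n W ρ) := by
  classical
  have hterm (τ : Equiv.Perm (Fin n)) : volume (Brho n W ρ ∩ {y | Antitone (y ∘ τ)}) =
      if ρ ∘ τ = ρ ∘ π then volume (Brho n W ρ ∩ {y | Antitone (y ∘ π)}) else 0 := by
    rw [volume_Brho_inter_antitone_comp, volume_Brho_inter_antitone_comp]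
    split_ifs with h
    · rw [h]
    · convert measure_empty (μ := (volume : Measure (Fin n → ℝ)))
      exact Set.eq_empty_of_forall_notMem fun y hy =>
        h (Tuple.unique_antitone (antitone_of_mem_Brho hW hy.1 hy.2) hρπ)
  rw [volume_eq_sum_inter_antitone_comp (measurableSet_Brho ρ),
    Finset.sum_congr rfl fun τ _ => hterm τ, Finset.sum_ite, Finset.sum_const_zero, add_zero,
    Finset.sum_const, nsmul_eq_mul, card_filter_comp_eq_comp]

end Boxes

theorem volume_computation_general (n : ℕ) (W : ℕ → ℝ) (hW0 : W 0 = 0)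
    (hW : ∀ i, i < n → W i < W (i + 1))
    (ρ : Fin n → Fin n) (π : Equiv.Perm (Fin n)) :
    (Cpi n W π ∩ Brho n W ρ = ∅ → volume (Cpi n W π ∩ Brho n W ρ) = 0) ∧
      (Cpi n W π ∩ Brho n W ρ ≠ ∅ →
        volume (Cpi n W π ∩ Brho n W ρ) =
          ENNReal.ofReal
            ((∏ i : Fin n, (W ((ρ i : ℕ) + 1) - W ((ρ i : ℕ)))) /
              (Nat.card (stab n ρ) : ℝ))) := by
  have hWmono : MonotoneOn W (Set.Iic n) := (strictMonoOn_Iic_of_lt_succ hW).monotoneOn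
  refine ⟨fun h => by rw [h, measure_empty], fun hne => ?_⟩
  obtain ⟨x, ⟨hxbox, hxπ⟩, hxρ⟩ := Set.nonempty_iff_ne_empty.2 hne
  have hρπ : Antitone (ρ ∘ π) := by
    rw [← preimage_comp_perm_Brho ρ π] at hxρ
    exact antitone_of_mem_Brho hWmono hxρ hxπ
  have hsub := Brho_subset_box hW0 hWmono ⟨x, hxbox, hxρ⟩
  have hset : Cpi n W π ∩ Brho n W ρ = Brho n W ρ ∩ {y | Antitone (y ∘ π)} := by
    ext y
    exact ⟨fun ⟨⟨_, hyπ⟩, hyρ⟩ => ⟨hyρ, hyπ⟩, fun ⟨hyρ, hyπ⟩ => ⟨⟨hsub hyρ, hyπ⟩, hyρ⟩⟩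
  have hcard : (Nat.card (stab n ρ) : ENNReal) ≠ 0 := by simp [Nat.card_pos.ne']
  rw [hset, ENNReal.ofReal_div_of_pos (by simpa [pos_iff_ne_zero] using hcard),
    ENNReal.ofReal_natCast, ← volume_Brho hWmono,
    ← card_stab_mul_volume_Brho_inter_antitone hWmono hρπ,
    mul_comm, ENNReal.mul_div_cancel_right hcard (ENNReal.natCast_ne_top _)]

theorem volume_computation (n : ℕ) (hn : 1 ≤ n) (W : ℕ → ℝ) (hW0 : W 0 = 0)
    (hW : ∀ i, i < n → W i < W (i + 1))
    (ρ : Fin n → Fin n) (π : Equiv.Perm (Fin n)) :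
    (Cpi n W π ∩ Brho n W ρ = ∅ → volume (Cpi n W π ∩ Brho n W ρ) = 0) ∧
      (Cpi n W π ∩ Brho n W ρ ≠ ∅ →
        volume (Cpi n W π ∩ Brho n W ρ) =
          ENNReal.ofReal
            ((∏ i : Fin n, (W ((ρ i : ℕ) + 1) - W ((ρ i : ℕ)))) /
              (Nat.card (stab n ρ) : ℝ))) :=
  volume_computation_general n W hW0 hW ρ π
end

section
/- Let n ≥ 1 and let 0 = W_0 < W_1 < ⋯ < W_n be real numbers. Let B = [0,W_1] × ⋯ × [0,W_n], for a permutation π of {1,…,n} let C_π = {x ∈ B : x_{π(1)} ≥ ⋯ ≥ x_{π(n)}}, and for ρ ∈ {1,…,n}^n let B_ρ = (W_{ρ_1−1}, W_{ρ_1}) × ⋯ × (W_{ρ_n−1}, W_{ρ_n}). Given ρ and π, define λ by λ_i = ρ_{π(i)}. Then C_π ∩ B_ρ ≠ ∅ if and only if λ is weakly decreasing (λ_1 ≥ λ_2 ≥ ⋯ ≥ λ_n) and λ_i ≤ π(i) for all 1 ≤ i ≤ n. -/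
open MeasureTheory

theorem partition_meet_condition (n : ℕ) (hn : 1 ≤ n) (W : ℕ → ℝ) (hW0 : W 0 = 0)
    (hW : ∀ i, i < n → W i < W (i + 1))
    (ρ : Fin n → Fin n) (π : Equiv.Perm (Fin n)) :
    (Cpi n W π ∩ Brho n W ρ).Nonempty ↔
      ((∀ i j : Fin n, i ≤ j → ρ (π j) ≤ ρ (π i)) ∧ ∀ i : Fin n, ρ (π i) ≤ π i) := by
  have Wlt : ∀ a b : ℕ, a < b → b ≤ n → W a < W b := by
    intro a b hab hbn
    induction b with
    | zero => omega
    | succ c ih =>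
      rcases Nat.lt_succ_iff_lt_or_eq.mp hab with h | h
      · exact (ih h (by omega)).trans (hW c (by omega))
      · subst h; exact hW a (by omega)
  have Wle : ∀ a b : ℕ, a ≤ b → b ≤ n → W a ≤ W b := by
    intro a b hab hbn
    rcases eq_or_lt_of_le hab with h | h
    · subst h; exact le_rfl
    · exact (Wlt a b h hbn).le
  constructor
  · rintro ⟨x, ⟨⟨hbox, hmono⟩, hrho⟩⟩
    constructor
    · intro i j hij
      by_contra hlt
      push_neg at hlt
      have h1 : x (π i) < W ((ρ (π i) : ℕ) + 1) := (hrho (π i)).2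
      have h2 : W ((ρ (π j)) : ℕ) < x (π j) := (hrho (π j)).1
      have h3 : W ((ρ (π i) : ℕ) + 1) ≤ W ((ρ (π j)) : ℕ) := by
        refine Wle _ _ ?_ (ρ (π j)).isLt.le
        have := Fin.lt_def.mp hlt
        omega
      have h4 := hmono i j hij
      linarith
    · intro i
      by_contra hlt
      push_neg at hlt
      have h1 : x (π i) ≤ W ((π i : ℕ) + 1) := (hbox (π i)).2
      have h2 : W ((ρ (π i)) : ℕ) < x (π i) := (hrho (π i)).1
      have h3 : W ((π i : ℕ) + 1) ≤ W ((ρ (π i)) : ℕ) := by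
        refine Wle _ _ ?_ (ρ (π i)).isLt.le
        have := Fin.lt_def.mp hlt
        omega
      linarith
  · rintro ⟨hdec, hle⟩
    have hle' : ∀ k : Fin n, ρ k ≤ k := by
      intro k
      have := hle (π.symm k)
      simpa using this
    refine ⟨fun k => (W (ρ k : ℕ) + W ((ρ k : ℕ) + 1)) / 2, ⟨⟨?_, ?_⟩, ?_⟩⟩
    · intro k
      have h1 : W ((ρ k : ℕ)) < W ((ρ k : ℕ) + 1) := hW _ (ρ k).isLt
      have h0 : (0 : ℝ) ≤ W (ρ k : ℕ) := by
        rw [← hW0]; exact Wle _ _ (Nat.zero_le _) (ρ k).isLt.le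
      have h2 : W ((ρ k : ℕ) + 1) ≤ W ((k : ℕ) + 1) := by
        refine Wle _ _ ?_ k.isLt
        have := Fin.le_def.mp (hle' k)
        omega
      exact ⟨by linarith, by linarith⟩
    · intro i j hij
      simp only
      rcases eq_or_lt_of_le (hdec i j hij) with h | h
      · rw [h]
      · have h1 : W ((ρ (π j) : ℕ)) < W ((ρ (π j) : ℕ) + 1) := hW _ (ρ (π j)).isLt
        have h2 : W ((ρ (π i) : ℕ)) < W ((ρ (π i) : ℕ) + 1) := hW _ (ρ (π i)).isLt
        have h3 : W ((ρ (π j) : ℕ) + 1) ≤ W ((ρ (π i) : ℕ)) := by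
          refine Wle _ _ ?_ (ρ (π i)).isLt.le
          have := Fin.lt_def.mp h
          omega
        linarith
    · intro k
      have h1 : W ((ρ k : ℕ)) < W ((ρ k : ℕ) + 1) := hW _ (ρ k).isLt
      exact ⟨by simp only; linarith, by simp only; linarith⟩
end

section
/- Let n ≥ 1 and let 0 = W_0 < W_1 < ⋯ < W_n be real numbers. Let B = [0,W_1] × ⋯ × [0,W_n], for a permutation π of {1,…,n} let C_π = {x ∈ B : x_{π(1)} ≥ ⋯ ≥ x_{π(n)}}, and for ρ ∈ {1,…,n}^n let B_ρ = (W_{ρ_1−1}, W_{ρ_1}) × ⋯ × (W_{ρ_n−1}, W_{ρ_n}). Given ρ and π, define λ by λ_i = ρ_{π(i)}, and define λ^max(π) by λ^max(π)_i = min{π(1),…,π(i)}. Then C_π ∩ B_ρ ≠ ∅ if and only if λ is weakly decreasing and λ_i ≤ λ^max(π)_i for all 1 ≤ i ≤ n. -/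
open MeasureTheory

/-- `λ^max(π)ᵢ = min{π(1), …, π(i)}` (1-indexed values, so `π j` contributes `(π j : ℕ) + 1`). -/
def lamMax (n : ℕ) (π : Equiv.Perm (Fin n)) (i : Fin n) : ℕ :=
  (Finset.Iic i).inf' ⟨i, Finset.mem_Iic.mpr le_rfl⟩ (fun j => (π j : ℕ) + 1)

lemma Wmono {n : ℕ} {W : ℕ → ℝ} (hW : ∀ i, i < n → W i < W (i + 1)) :
    ∀ a b : ℕ, a ≤ b → b ≤ n → W a ≤ W b := by
  intro a b hab hbn
  induction b with
  | zero => simp [Nat.le_zero.mp hab]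
  | succ m ih =>
    rcases Nat.lt_or_ge a (m+1) with h | h
    · exact le_trans (ih (Nat.lt_succ_iff.mp h) (le_trans (Nat.le_succ m) hbn))
        (le_of_lt (hW m (Nat.lt_of_succ_le hbn)))
    · have : a = m + 1 := le_antisymm hab h
      simp [this]

theorem lambda_max_criterion (n : ℕ) (hn : 1 ≤ n) (W : ℕ → ℝ) (hW0 : W 0 = 0)
    (hW : ∀ i, i < n → W i < W (i + 1))
    (ρ : Fin n → Fin n) (π : Equiv.Perm (Fin n)) :
    (Cpi n W π ∩ Brho n W ρ).Nonempty ↔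
      ((∀ i j : Fin n, i ≤ j → ρ (π j) ≤ ρ (π i)) ∧
        ∀ i : Fin n, (ρ (π i) : ℕ) + 1 ≤ lamMax n π i) := by
  have wmono := Wmono hW
  constructor
  · rintro ⟨x, ⟨⟨hbox, hchain⟩, hB⟩⟩
    constructor
    · intro i j hij
      by_contra h
      push_neg at h
      have h1 : ((ρ (π i) : ℕ) + 1) ≤ (ρ (π j) : ℕ) := h
      have : x (π i) < x (π j) := by
        calc x (π i) < W ((ρ (π i) : ℕ) + 1) := (hB (π i)).2
          _ ≤ W (ρ (π j) : ℕ) := wmono _ _ h1 (le_of_lt (ρ (π j)).isLt)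
          _ < x (π j) := (hB (π j)).1
      exact absurd (hchain i j hij) (not_le.mpr this)
    · intro i
      unfold lamMax
      apply Finset.le_inf'
      intro j hj
      have hji : j ≤ i := Finset.mem_Iic.mp hj
      by_contra h
      push_neg at h
      have h1 : ((π j : ℕ) + 1) ≤ (ρ (π i) : ℕ) := Nat.lt_succ_iff.mp h
      have : x (π i) < x (π i) := by
        calc x (π i) ≤ x (π j) := hchain j i hji
          _ ≤ W ((π j : ℕ) + 1) := (hbox (π j)).2
          _ ≤ W (ρ (π i) : ℕ) := wmono _ _ h1 (le_of_lt (ρ (π i)).isLt)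
          _ < x (π i) := (hB (π i)).1
      exact absurd this (lt_irrefl _)
  · rintro ⟨hdec, hlam⟩
    -- ρ k ≤ k for all k
    have hρk : ∀ k : Fin n, (ρ k : ℕ) ≤ (k : ℕ) := by
      intro k
      have := hlam (π.symm k)
      have h2 : lamMax n π (π.symm k) ≤ (π (π.symm k) : ℕ) + 1 :=
        Finset.inf'_le _ (Finset.mem_Iic.mpr le_rfl)
      simpa using le_trans this h2
    set t : Fin n → ℝ := fun k => ((n : ℝ) - (π.symm k : ℕ)) / (n + 1) with ht
    have ht_pos : ∀ k, 0 < t k := by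
      intro k
      apply div_pos
      · have : ((π.symm k : ℕ) : ℝ) < (n : ℝ) := by exact_mod_cast (π.symm k).isLt
        linarith
      · positivity
    have ht_lt : ∀ k, t k < 1 := by
      intro k
      rw [div_lt_one (by positivity)]
      have : (0:ℝ) ≤ ((π.symm k : ℕ) : ℝ) := Nat.cast_nonneg _
      linarith
    set x : Fin n → ℝ := fun k => W (ρ k : ℕ) + t k * (W ((ρ k : ℕ) + 1) - W (ρ k : ℕ))
      with hx
    have hgap : ∀ k : Fin n, 0 < W ((ρ k : ℕ) + 1) - W (ρ k : ℕ) := by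
      intro k
      have := hW (ρ k : ℕ) (ρ k).isLt
      linarith
    have hxin : ∀ k : Fin n, W (ρ k : ℕ) < x k ∧ x k < W ((ρ k : ℕ) + 1) := by
      intro k
      constructor
      · have : 0 < t k * (W ((ρ k : ℕ) + 1) - W (ρ k : ℕ)) :=
          mul_pos (ht_pos k) (hgap k)
        simp only [hx]; linarith
      · have : t k * (W ((ρ k : ℕ) + 1) - W (ρ k : ℕ)) <
            1 * (W ((ρ k : ℕ) + 1) - W (ρ k : ℕ)) :=
          mul_lt_mul_of_pos_right (ht_lt k) (hgap k)
        simp only [hx]; linarith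
    refine ⟨x, ⟨⟨?_, ?_⟩, ?_⟩⟩
    · -- box
      intro k
      constructor
      · have h0 : W 0 ≤ W (ρ k : ℕ) := wmono 0 _ (Nat.zero_le _) (le_of_lt (ρ k).isLt)
        have := (hxin k).1
        rw [hW0] at h0
        linarith
      · have h1 : W ((ρ k : ℕ) + 1) ≤ W ((k : ℕ) + 1) :=
          wmono _ _ (Nat.succ_le_succ (hρk k)) (Nat.succ_le_of_lt k.isLt)
        have := (hxin k).2
        linarith
    · -- chain
      intro i j hij
      have hρ := hdec i j hij
      rcases lt_or_eq_of_le hρ with h | h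
      · have h1 : ((ρ (π j) : ℕ) + 1) ≤ (ρ (π i) : ℕ) := h
        refine le_of_lt ?_
        calc x (π j) < W ((ρ (π j) : ℕ) + 1) := (hxin (π j)).2
          _ ≤ W (ρ (π i) : ℕ) := wmono _ _ h1 (le_of_lt (ρ (π i)).isLt)
          _ < x (π i) := (hxin (π i)).1
      · have hti : t (π j) ≤ t (π i) := by
          simp only [ht, Equiv.symm_apply_apply]
          have hcast : ((i : ℕ) : ℝ) ≤ ((j : ℕ) : ℝ) := by exact_mod_cast hij
          gcongr
        have hmul := mul_le_mul_of_nonneg_right hti (le_of_lt (hgap (π i)))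
        simp only [hx, h]
        linarith
    · intro k
      exact ⟨(hxin k).1, (hxin k).2⟩
end
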